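/- In the Hodkinson–Otto construction (A ⊆ B finite structures, 𝒰 the large subsets of B, C the set of pairs (b,χ) with χ a b-valuation), there is an injective map ν: A → C with ν(a) = (a, χ_a) whose image is a generic subset of C. Concretely, fixing for each u ∈ 𝒰 an enumeration u ∩ A = {a₁ᵘ,…,aₙᵘ} with n < |u|, define χ_a(u) = 0 if a ∉ u and χ_a(u) = i where a = aᵢᵘ if a ∈ u; then {ν(a) : a ∈ A} is generic. -/
import Mathlib


open FirstOrder

/-- A permutation of `B` is an automorphism of the `L`-structure `B`. -/
def IsAut (L : FirstOrder.Language) {B : Type*} [L.Structure B] (g : Equiv.Perm B) : Prop :=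
  ∀ (n : ℕ) (R : L.Relations n) (t : Fin n → B),
    Language.Structure.RelMap R t ↔ Language.Structure.RelMap R (fun i => g (t i))

/-- `u ⊆ B` is large (over `A`) if no automorphism of `B` maps `u` into `A`. -/
def IsLarge (L : FirstOrder.Language) {B : Type*} [L.Structure B] (A u : Set B) : Prop :=
  ¬∃ g : Equiv.Perm B, IsAut L g ∧ ⇑g '' u ⊆ A

/-- A `b`-valuation: `χ(u) = 0` if `b ∉ u` and `1 ≤ χ(u) < |u|` if `b ∈ u`,
for every large set `u`. -/
def IsValuation (L : FirstOrder.Language) {B : Type*} [L.Structure B] (A : Set B)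
    (b : B) (χ : Set B → ℕ) : Prop :=
  ∀ u : Set B, IsLarge L A u →
    (b ∉ u → χ u = 0) ∧ (b ∈ u → 1 ≤ χ u ∧ χ u < u.ncard)

/-- `S ⊆ C` is generic: distinct points have distinct first coordinates, and
their valuations differ on every large set containing both first coordinates. -/
def IsGeneric (L : FirstOrder.Language) {B : Type*} [L.Structure B] (A : Set B)
    (S : Set (B × (Set B → ℕ))) : Prop :=
  ∀ p ∈ S, ∀ q ∈ S, p ≠ q →
    p.1 ≠ q.1 ∧ ∀ u : Set B, IsLarge L A u → p.1 ∈ u → q.1 ∈ u → p.2 u ≠ q.2 u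

/-- In the Hodkinson–Otto construction there is an injective map `ν : A → C`,
`ν(a) = (a, χ_a)`, whose image is a generic subset of `C`. -/
theorem exists_generic_embedding_of_A (L : FirstOrder.Language) {B : Type*}
    [L.Structure B] [Fintype B] (A : Set B) :
    ∃ ν : A → B × (Set B → ℕ),
      (∀ a : A, (ν a).1 = ↑a) ∧
      (∀ a : A, IsValuation L A (ν a).1 (ν a).2) ∧
      Function.Injective ν ∧
      IsGeneric L A (Set.range ν) := by
  classical
  -- large sets are not contained in A
  have hnot : ∀ u : Set B, IsLarge L A u → ¬ u ⊆ A := by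
    intro u hu hsub
    exact hu ⟨Equiv.refl B, fun n R t => Iff.rfl, by simpa using hsub⟩
  have hcard : ∀ u : Set B, IsLarge L A u → (u ∩ A).ncard < u.ncard := by
    intro u hu
    refine Set.ncard_lt_ncard ?_ (Set.toFinite u)
    rw [Set.ssubset_iff_of_subset Set.inter_subset_left]
    obtain ⟨x, hxu, hxA⟩ := Set.not_subset.mp (hnot u hu)
    exact ⟨x, hxu, fun h => hxA h.2⟩
  -- choose embeddings of u ∩ A into Fin (u.ncard - 1) for large u
  have hemb : ∀ u : Set B, IsLarge L A u →
      Nonempty ((u ∩ A : Set B) ↪ Fin (u.ncard - 1)) := by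
    intro u hu
    rw [Function.Embedding.nonempty_iff_card_le]
    rw [Fintype.card_fin]
    have h1 : Fintype.card (u ∩ A : Set B) = (u ∩ A).ncard := by
      rw [Set.ncard_eq_toFinset_card', Set.toFinset_card]
    have h2 := hcard u hu
    omega
  set e : ∀ u : Set B, IsLarge L A u → ((u ∩ A : Set B) ↪ Fin (u.ncard - 1)) :=
    fun u hu => (hemb u hu).some with he
  -- the valuations
  set χ : B → Set B → ℕ := fun b u =>
    if hu : IsLarge L A u then
      if hb : b ∈ u ∩ A then (e u hu ⟨b, hb⟩).1 + 1 else 0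
    else 0 with hχ
  refine ⟨fun a => (↑a, χ ↑a), fun a => rfl, ?_, ?_, ?_⟩
  · -- valuation property
    intro a u hu
    constructor
    · intro hb
      simp only [hχ, dif_pos hu]
      rw [dif_neg (fun h => hb h.1)]
    · intro hb
      have hbA : (↑a : B) ∈ u ∩ A := ⟨hb, a.2⟩
      have hcu := hcard u hu
      have hlt : ((e u hu ⟨↑a, hbA⟩ : Fin (u.ncard - 1)) : ℕ) < u.ncard - 1 :=
        (e u hu ⟨↑a, hbA⟩).2
      simp only [hχ, dif_pos hu, dif_pos hbA]
      omega
  · -- injectivity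
    intro a b hab
    exact Subtype.coe_injective (congrArg Prod.fst hab)
  · -- genericity
    rintro p ⟨a, rfl⟩ q ⟨b, rfl⟩ hpq
    have hab : (↑a : B) ≠ ↑b := by
      intro h
      exact hpq (by simp [h])
    refine ⟨hab, ?_⟩
    intro u hu hau hbu
    have haA : (↑a : B) ∈ u ∩ A := ⟨hau, a.2⟩
    have hbA : (↑b : B) ∈ u ∩ A := ⟨hbu, b.2⟩
    simp only [hχ, dif_pos hu, dif_pos haA, dif_pos hbA]
    intro h
    have hv : e u hu ⟨↑a, haA⟩ = e u hu ⟨↑b, hbA⟩ := Fin.val_injective (by omega)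
    exact hab (Subtype.mk_eq_mk.mp ((e u hu).injective hv))
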